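/- arXiv:2003.12169 — 2 statements merged into one kernel-verified Lean document; each statement's English description precedes it below -/
import Mathlib

section
/- Let G be a finite simple graph on vertex set V, let d : V → C be a stable coloring of G, let c₀ : V → A factor through d, let f : ℕ → A → Multiset A → A be update functions with iterated message-passing colorings c_t, and fix T ∈ ℕ. For any function g : A → B, define the augmented initial coloring c₀'(v) = (c₀(v), g(c_T(v))) ∈ A × B, and let c'_t be the iterated message-passing colorings obtained from c₀' under any further sequence of update functions f' : ℕ → (A × B) → Multiset (A × B) → (A × B). Then for every t ∈ ℕ and all u, v ∈ V, d(u) = d(v) implies c'_t(u) = c'_t(v). (This is the formal core of Corollary 1: feeding back predicted labels obtained as a deterministic pointwise function of the current representation does not increase the distinguishing power of message passing beyond that of a stable coloring.) -/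
/-!
If `c` factors through a stable coloring `d`, then so does `v ↦ M_c(v)`, since `M_c(v)` is the
image of `M_d(v)` under the factor map. Hence by induction every message-passing iterate started
from a coloring that factors through `d` factors through `d`. This applies first to `c_T`, and
then to the iterates started from `v ↦ (c₀(v), g(c_T(v)))`, whose two components factor through `d`.
-/

/-- The multiset of `c`-values of the neighbors of `v` in `G`. -/
def nbrMultiset {V A : Type*} [Fintype V] (G : SimpleGraph V) [DecidableRel G.Adj]
    (c : V → A) (v : V) : Multiset A :=
  (G.neighborFinset v).val.map c

/-- Iterated message-passing colorings: `c_{t+1}(v) = f_t (c_t v) (M_{c_t} v)`. -/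
def iterColor {V A : Type*} [Fintype V] (G : SimpleGraph V) [DecidableRel G.Adj]
    (c₀ : V → A) (f : ℕ → A → Multiset A → A) : ℕ → V → A
  | 0 => c₀
  | (t + 1) => fun v =>
      f t (iterColor G c₀ f t v) (nbrMultiset G (iterColor G c₀ f t) v)

open Function

section MessagePassing

variable {V C A : Type*} [Fintype V] (G : SimpleGraph V) [DecidableRel G.Adj] {d : V → C}

theorem nbrMultiset_comp (h : C → A) (d : V → C) (v : V) :
    nbrMultiset G (h ∘ d) v = (nbrMultiset G d v).map h := by
  simp only [nbrMultiset, Multiset.map_map]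

theorem FactorsThrough.nbrMultiset_eq
    (hstable : ∀ u v : V, d u = d v → nbrMultiset G d u = nbrMultiset G d v)
    {c : V → A} (hc : c.FactorsThrough d) {u v : V} (huv : d u = d v) :
    nbrMultiset G c u = nbrMultiset G c v := by
  have hc_eq : c = extend d c (fun _ => c u) ∘ d :=
    funext fun w => (hc.extend_apply _ w).symm
  rw [hc_eq, nbrMultiset_comp, nbrMultiset_comp, hstable u v huv]

theorem iterColor_factorsThrough
    (hstable : ∀ u v : V, d u = d v → nbrMultiset G d u = nbrMultiset G d v)
    {c₀ : V → A} (hc₀ : c₀.FactorsThrough d) (f : ℕ → A → Multiset A → A) (t : ℕ) :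
    (iterColor G c₀ f t).FactorsThrough d := by
  induction t with
  | zero => exact hc₀
  | succ t ih =>
    intro u v huv
    exact congrArg₂ (f t) (ih huv) (FactorsThrough.nbrMultiset_eq G hstable ih huv)

end MessagePassing

/-- Feeding back predicted labels obtained as a deterministic pointwise function of the current
representation does not increase the distinguishing power of message passing beyond a
stable coloring. -/
theorem stmt1 {V C A B : Type*} [Fintype V] (G : SimpleGraph V) [DecidableRel G.Adj]
    (d : V → C)
    (hstable : ∀ u v : V, d u = d v → nbrMultiset G d u = nbrMultiset G d v)
    (c₀ : V → A) (hfac : ∃ h : C → A, c₀ = h ∘ d)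
    (f : ℕ → A → Multiset A → A) (T : ℕ)
    (g : A → B)
    (f' : ℕ → (A × B) → Multiset (A × B) → (A × B)) :
    ∀ (t : ℕ) (u v : V), d u = d v →
      iterColor G (fun w => (c₀ w, g (iterColor G c₀ f T w))) f' t u =
      iterColor G (fun w => (c₀ w, g (iterColor G c₀ f T w))) f' t v := by
  obtain ⟨h, rfl⟩ := hfac
  have hc₀ : (h ∘ d).FactorsThrough d := fun _ _ huv => congrArg h huv
  have hc_T := iterColor_factorsThrough G hstable hc₀ f T
  have hc₀' : (fun w => ((h ∘ d) w, g (iterColor G (h ∘ d) f T w))).FactorsThrough d :=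
    fun _ _ huv => Prod.ext (hc₀ huv) (congrArg g (hc_T huv))
  intro t u v huv
  exact iterColor_factorsThrough G hstable hc₀' f' t huv
end

section
/- Let G be a finite simple graph on vertex set V with initial coloring x : V → A, let f : ℕ → A → Multiset A → A be update functions with iterated message-passing colorings c_t, let d ∈ ℕ, and let v₁, v₂ ∈ V. Suppose the d-hop egonets of v₁ and v₂ are isomorphic respecting features: there is a bijection φ from the closed d-ball B_d(v₁) onto the closed d-ball B_d(v₂) with φ(v₁) = v₂, x(φ(u)) = x(u) for all u ∈ B_d(v₁), and u adjacent to w in G if and only if φ(u) adjacent to φ(w) in G, for all u, w ∈ B_d(v₁). Then c_d(v₁) = c_d(v₂). (This is the first claim of Proposition 2: a message-passing (WL-)GNN with d layers generates identical representations for two nodes whose d-hop egonets are isomorphic.) -/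
/-- The closed `t`-ball around `v` in `G`: vertices reachable from `v` by a walk of
length at most `t`. -/
def ball {V : Type*} (G : SimpleGraph V) (v : V) (t : ℕ) : Set V :=
  {u | ∃ w : G.Walk v u, w.length ≤ t}

/-!
An isomorphism of the `d`-egonets, extended arbitrarily to the whole vertex set, maps walks
inside the ball to walks of the same length, so it sends the `k`-ball onto the `k`-ball for
`k ≤ d`; hence it maps the neighbourhood of every vertex at distance `< d` from the centre
bijectively onto the neighbourhood of its image. Since layer `t + 1` only reads a vertex and its
neighbours at layer `t`, induction on `t` shows that the colourings at layer `t` agree at `u`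
and at its image for every `u` at distance `≤ d - t` from the centre.
-/

open Set

section

variable {V W A : Type*}

lemma ball_mono (G : SimpleGraph V) (v : V) {k l : ℕ} (h : k ≤ l) :
    ball G v k ⊆ ball G v l :=
  fun _ ⟨p, hp⟩ => ⟨p, hp.trans h⟩

lemma mem_ball_succ_of_adj {G : SimpleGraph V} {v u w : V} {k : ℕ} (hu : u ∈ ball G v k)
    (h : G.Adj u w) : w ∈ ball G v (k + 1) := by
  obtain ⟨p, hp⟩ := hu
  exact ⟨p.concat h, by rw [SimpleGraph.Walk.length_concat]; omega⟩

lemma mem_ball_of_mem_support {G : SimpleGraph V} {v u z : V} {k : ℕ} (p : G.Walk v u)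
    (hp : p.length ≤ k) (hz : z ∈ p.support) : z ∈ ball G v k := by
  classical
  exact ⟨p.takeUntil z hz, (p.length_takeUntil_le_length hz).trans hp⟩

lemma exists_walk_length_eq_of_adj_on {G : SimpleGraph V} {H : SimpleGraph W} {s : Set V}
    {g : V → W} (hg : ∀ a ∈ s, ∀ b ∈ s, G.Adj a b → H.Adj (g a) (g b)) :
    ∀ {a b : V} (p : G.Walk a b), (∀ z ∈ p.support, z ∈ s) →
      ∃ q : H.Walk (g a) (g b), q.length = p.length
  | _, _, .nil, _ => ⟨.nil, rfl⟩
  | _, _, .cons h p, hp => by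
    simp only [SimpleGraph.Walk.support_cons, List.mem_cons, forall_eq_or_imp] at hp
    obtain ⟨q, hq⟩ := exists_walk_length_eq_of_adj_on hg p hp.2
    exact ⟨.cons (hg _ hp.1 _ (hp.2 _ p.start_mem_support) h) q, by simp [hq]⟩

lemma mapsTo_ball {G : SimpleGraph V} {H : SimpleGraph W} {v : V} {d k : ℕ} {g : V → W}
    (hg : ∀ a ∈ ball G v d, ∀ b ∈ ball G v d, G.Adj a b → H.Adj (g a) (g b)) (hk : k ≤ d) :
    MapsTo g (ball G v k) (ball H (g v) k) := by
  rintro u ⟨p, hp⟩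
  obtain ⟨q, hq⟩ :=
    exists_walk_length_eq_of_adj_on hg p fun _ hz => mem_ball_of_mem_support p (hp.trans hk) hz
  exact ⟨q, hq ▸ hp⟩

lemma bijOn_neighborSet_of_mem_ball {G : SimpleGraph V} {H : SimpleGraph W} {v u : V}
    {d k : ℕ} {g : V → W} (hg : BijOn g (ball G v d) (ball H (g v) d))
    (hadj : ∀ a ∈ ball G v d, ∀ b ∈ ball G v d, G.Adj a b ↔ H.Adj (g a) (g b))
    (hk : k < d) (hu : u ∈ ball G v k) :
    BijOn g (G.neighborSet u) (H.neighborSet (g u)) := by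
  have hud : u ∈ ball G v d := ball_mono G v hk.le hu
  have hnbr : G.neighborSet u ⊆ ball G v d := fun w hw =>
    ball_mono G v hk (mem_ball_succ_of_adj hu hw)
  refine ⟨fun w hw => (hadj u hud w (hnbr hw)).1 hw, hg.injOn.mono hnbr, fun w' hw' => ?_⟩
  have hgu : g u ∈ ball H (g v) k := mapsTo_ball (fun a ha b hb => (hadj a ha b hb).1) hk.le hu
  obtain ⟨w, hw, rfl⟩ := hg.surjOn (ball_mono H (g v) hk (mem_ball_succ_of_adj hgu hw'))
  exact ⟨w, (hadj u hud w hw).2 hw', rfl⟩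

variable [Fintype V] [Fintype W]

lemma nbrMultiset_eq_of_bijOn {G : SimpleGraph V} [DecidableRel G.Adj] {H : SimpleGraph W}
    [DecidableRel H.Adj] {c : V → A} {c' : W → A} {g : V → W} {u : V}
    (hg : BijOn g (G.neighborSet u) (H.neighborSet (g u)))
    (hc : ∀ w ∈ G.neighborSet u, c' (g w) = c w) :
    nbrMultiset H c' (g u) = nbrMultiset G c u := by
  classical
  have himage : H.neighborFinset (g u) = (G.neighborFinset u).image g := by
    apply Finset.coe_injective
    simp only [Finset.coe_image, SimpleGraph.coe_neighborFinset, hg.image_eq]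
  rw [← SimpleGraph.coe_neighborFinset] at hg hc
  unfold nbrMultiset
  rw [himage, Finset.image_val_of_injOn hg.injOn, Multiset.map_map]
  exact Multiset.map_congr rfl fun w hw => hc w hw

theorem iterColor_eq_of_bijOn_neighborSet (G : SimpleGraph V) [DecidableRel G.Adj]
    (H : SimpleGraph W) [DecidableRel H.Adj] (x : V → A) (y : W → A)
    (f : ℕ → A → Multiset A → A) (g : V → W) (R : ℕ → Set V)
    (hx : ∀ u ∈ R 0, y (g u) = x u)
    (hR : ∀ t, ∀ u ∈ R (t + 1), u ∈ R t ∧ G.neighborSet u ⊆ R t ∧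
      BijOn g (G.neighborSet u) (H.neighborSet (g u))) :
    ∀ t, ∀ u ∈ R t, iterColor H y f t (g u) = iterColor G x f t u := by
  intro t
  induction t with
  | zero => exact hx
  | succ t ih =>
    intro u hu
    obtain ⟨hut, hnbr, hbij⟩ := hR t u hu
    simp only [iterColor]
    rw [ih u hut, nbrMultiset_eq_of_bijOn hbij fun w hw => ih w (hnbr hw)]

theorem iterColor_eq_of_bijOn_ball (G : SimpleGraph V) [DecidableRel G.Adj]
    (H : SimpleGraph W) [DecidableRel H.Adj] (x : V → A) (y : W → A)
    (f : ℕ → A → Multiset A → A) {d : ℕ} {v : V} {g : V → W}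
    (hg : BijOn g (ball G v d) (ball H (g v) d))
    (hx : ∀ u ∈ ball G v d, y (g u) = x u)
    (hadj : ∀ a ∈ ball G v d, ∀ b ∈ ball G v d, G.Adj a b ↔ H.Adj (g a) (g b)) :
    iterColor H y f d (g v) = iterColor G x f d v := by
  -- `t ≤ d` is needed because `d - t` truncates
  refine iterColor_eq_of_bijOn_neighborSet G H x y f g
    (fun t => {u | t ≤ d ∧ u ∈ ball G v (d - t)}) (fun u hu => hx u hu.2) ?_ d v
    ⟨le_rfl, ⟨.nil, Nat.zero_le _⟩⟩
  rintro t u ⟨ht, hu⟩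
  refine ⟨⟨by omega, ball_mono G v (by omega) hu⟩, fun w hw => ⟨by omega, ?_⟩,
    bijOn_neighborSet_of_mem_ball hg hadj (by omega) hu⟩
  simpa [show d - (t + 1) + 1 = d - t by omega] using mem_ball_succ_of_adj hu hw

end

lemma Function.Bijective.bijOn_extend_val {α β : Type*} {s : Set α} {t : Set β} {φ : s → t}
    (hφ : Function.Bijective φ) (g₀ : α → β) :
    BijOn (Function.extend Subtype.val (fun u => (φ u : β)) g₀) s t := by
  have hext : ∀ u : s, Function.extend Subtype.val (fun u => (φ u : β)) g₀ u = φ u :=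
    Subtype.val_injective.extend_apply _ _
  refine ⟨fun u hu => ?_, fun u hu w hw h => ?_, fun b hb => ?_⟩
  · simpa only [hext ⟨u, hu⟩] using (φ ⟨u, hu⟩).2
  · rw [hext ⟨u, hu⟩, hext ⟨w, hw⟩] at h
    exact congrArg Subtype.val (hφ.1 (Subtype.ext h))
  · obtain ⟨u, hu⟩ := hφ.2 ⟨b, hb⟩
    exact ⟨u, u.2, by rw [hext u, hu]⟩

/-- A message-passing (WL-)GNN with `d` layers generates identical representations for two
nodes whose `d`-hop egonets are isomorphic (respecting features). -/
theorem stmt8 {V A : Type*} [Fintype V] (G : SimpleGraph V) [DecidableRel G.Adj]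
    (x : V → A) (f : ℕ → A → Multiset A → A)
    (d : ℕ) (v₁ v₂ : V)
    (φ : ball G v₁ d → ball G v₂ d)
    (hbij : Function.Bijective φ)
    (hv : (φ ⟨v₁, ⟨SimpleGraph.Walk.nil, Nat.zero_le d⟩⟩ : V) = v₂)
    (hx : ∀ u : ball G v₁ d, x (φ u : V) = x (u : V))
    (hadj : ∀ u w : ball G v₁ d,
      G.Adj (u : V) (w : V) ↔ G.Adj (φ u : V) (φ w : V)) :
    iterColor G x f d v₁ = iterColor G x f d v₂ := by
  set g : V → V := Function.extend Subtype.val (fun u => (φ u : V)) id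
  have hg : ∀ u : ball G v₁ d, g u = φ u := Subtype.val_injective.extend_apply _ _
  have hgv : g v₁ = v₂ := (hg _).trans hv
  have hbijOn : BijOn g (ball G v₁ d) (ball G (g v₁) d) := hgv ▸ hbij.bijOn_extend_val id
  rw [← hgv]
  refine (iterColor_eq_of_bijOn_ball G G x x f hbijOn (fun u hu => ?_) fun a ha b hb => ?_).symm
  · rw [hg ⟨u, hu⟩, hx]
  · rw [hg ⟨a, ha⟩, hg ⟨b, hb⟩]
    exact hadj ⟨a, ha⟩ ⟨b, hb⟩
end
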